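/- Let K, M ⊆ ℝ^d be nonempty compact convex sets with K ∪ M convex, let E be a closed convex set with unique nearest points p(K, E), p(M, E), p(K ∪ M, E), p(K ∩ M, E) as appropriate. Then the multiset of pairs {(d(K ∪ M, E), p(K ∪ M, E)), (d(K ∩ M, E), p(K ∩ M, E))} equals the multiset {(d(K, E), p(K, E)), (d(M, E), p(M, E))}. In particular, for any predicate Q on distance–point pairs, 1{Q(K ∪ M, E)} + 1{Q(K ∩ M, E)} = 1{Q(K, E)} + 1{Q(M, E)}. -/

import Mathlib

noncomputable section

open scoped Classical

/-- The distance `d(K, E) = inf{‖x − y‖ : x ∈ K, y ∈ E}` between two sets. -/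
def setDist {d : ℕ} (K E : Set (EuclideanSpace ℝ (Fin d))) : ℝ :=
  sInf (Set.image2 dist K E)

/-- `x` is the unique nearest point of `K` to `E`. -/
def IsUniqueNearestPoint {d : ℕ} (K E : Set (EuclideanSpace ℝ (Fin d)))
    (x : EuclideanSpace ℝ (Fin d)) : Prop :=
  x ∈ K ∧ Metric.infDist x E = setDist K E ∧
    ∀ y ∈ K, Metric.infDist y E = setDist K E → y = x

/-!
If the nearest point `pU` of `K ∪ M` lies in `K`, it is also the nearest point of `K`.
The distance to a convex set is a convex function, so along the segment from `pU` to `pM`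
it stays `≤ d(M, E)`; since `pM` is the unique point of `M` at that distance, the half-open
segment `[pU, pM)` avoids `M`, hence lies in `K`, and `pM ∈ K` because `K` is closed.
So `pM` is the nearest point of `K ∩ M`. Otherwise `pU ∈ M` and the roles of `K`, `M` swap.
-/

open Metric Set

theorem convexOn_infDist {F : Type*} [NormedAddCommGroup F] [NormedSpace ℝ F] {S : Set F}
    (hS : Convex ℝ S) : ConvexOn ℝ univ (infDist · S) := by
  refine ⟨convex_univ, fun x _ y _ a b ha hb hab => ?_⟩
  rcases S.eq_empty_or_nonempty with rfl | hne
  · simp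
  refine le_of_forall_pos_le_add fun ε hε => ?_
  obtain ⟨e₁, he₁, hx⟩ := (infDist_lt_iff hne).1 (lt_add_of_pos_right (infDist x S) hε)
  obtain ⟨e₂, he₂, hy⟩ := (infDist_lt_iff hne).1 (lt_add_of_pos_right (infDist y S) hε)
  calc infDist (a • x + b • y) S ≤ dist (a • x + b • y) (a • e₁ + b • e₂) :=
        infDist_le_dist_of_mem (hS he₁ he₂ ha hb hab)
    _ ≤ dist (a • x) (a • e₁) + dist (b • y) (b • e₂) := dist_add_add_le _ _ _ _
    _ = a * dist x e₁ + b * dist y e₂ := by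
        rw [dist_smul₀, dist_smul₀, Real.norm_of_nonneg ha, Real.norm_of_nonneg hb]
    _ ≤ a * (infDist x S + ε) + b * (infDist y S + ε) := by gcongr
    _ = a • infDist x S + b • infDist y S + ε := by
        simp only [smul_eq_mul]; linear_combination ε * hab

section NearestPoint

variable {d : ℕ} {K K' M E : Set (EuclideanSpace ℝ (Fin d))}
  {p q pK pM pU pI : EuclideanSpace ℝ (Fin d)}

theorem bddBelow_image2_dist : BddBelow (image2 dist K E) :=
  ⟨0, by rintro _ ⟨x, -, y, -, rfl⟩; exact dist_nonneg⟩

theorem setDist_le_infDist (hp : p ∈ K) : setDist K E ≤ infDist p E := by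
  rcases E.eq_empty_or_nonempty with rfl | hE
  · simp [setDist]
  refine le_of_forall_pos_le_add fun ε hε => ?_
  obtain ⟨e, he, hpe⟩ := (infDist_lt_iff hE).1 (lt_add_of_pos_right (infDist p E) hε)
  exact (csInf_le bddBelow_image2_dist (mem_image2_of_mem hp he)).trans hpe.le

theorem setDist_anti (hK : K.Nonempty) (hKK' : K ⊆ K') : setDist K' E ≤ setDist K E := by
  rcases E.eq_empty_or_nonempty with rfl | hE
  · simp [setDist]
  exact csInf_le_csInf bddBelow_image2_dist (hK.image2 hE) (image2_subset_right hKK')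

namespace IsUniqueNearestPoint

theorem unique (hp : IsUniqueNearestPoint K E p) (hq : IsUniqueNearestPoint K E q) : p = q :=
  hq.2.2 p hp.1 hp.2.1

theorem setDist_eq_of_subset (hp : IsUniqueNearestPoint K' E p) (hKK' : K ⊆ K') (hpK : p ∈ K) :
    setDist K E = setDist K' E :=
  le_antisymm ((setDist_le_infDist hpK).trans hp.2.1.le) (setDist_anti ⟨p, hpK⟩ hKK')

theorem of_subset (hp : IsUniqueNearestPoint K' E p) (hKK' : K ⊆ K') (hpK : p ∈ K) :
    IsUniqueNearestPoint K E p := by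
  rw [IsUniqueNearestPoint, hp.setDist_eq_of_subset hKK' hpK]
  exact ⟨hpK, hp.2.1, fun y hy => hp.2.2 y (hKK' hy)⟩

theorem mem_of_mem_union (hK : IsClosed K) (hU : Convex ℝ (K ∪ M)) (hE : Convex ℝ E)
    (hpU : IsUniqueNearestPoint (K ∪ M) E pU) (hpM : IsUniqueNearestPoint M E pM)
    (hpUK : pU ∈ K) : pM ∈ K := by
  by_cases hUM : pU = pM
  · exact hUM ▸ hpUK
  have hdist : setDist (K ∪ M) E ≤ setDist M E :=
    setDist_anti ⟨pM, hpM.1⟩ subset_union_right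
  have hseg : openSegment ℝ pU pM ⊆ K := by
    intro z hz
    obtain ⟨a, b, ha, hb, hab, rfl⟩ := id hz
    refine (hU.segment_subset (Or.inl hpUK) (Or.inr hpM.1)
      (openSegment_subset_segment _ _ _ hz)).resolve_right fun hzM => hUM ?_
    have hle : infDist (a • pU + b • pM) E ≤ setDist M E :=
      calc infDist (a • pU + b • pM) E ≤ a * infDist pU E + b * infDist pM E :=
            (convexOn_infDist hE).2 trivial trivial ha.le hb.le hab
        _ ≤ a * setDist M E + b * setDist M E := by rw [hpU.2.1, hpM.2.1]; gcongr
        _ = setDist M E := by rw [← add_mul, hab, one_mul]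
    have hzpM : a • pU + b • pM = pM :=
      hpM.2.2 _ hzM (le_antisymm hle (setDist_le_infDist hzM))
    exact right_mem_openSegment_iff.1 (hzpM ▸ hz)
  have hclosure := segment_subset_closure_openSegment.trans (closure_mono hseg)
    (right_mem_segment ℝ pU pM)
  rwa [hK.closure_eq] at hclosure

theorem union_inter_of_mem (hK : IsClosed K) (hU : Convex ℝ (K ∪ M)) (hE : Convex ℝ E)
    (hpK : IsUniqueNearestPoint K E pK) (hpM : IsUniqueNearestPoint M E pM)
    (hpU : IsUniqueNearestPoint (K ∪ M) E pU) (hpI : IsUniqueNearestPoint (K ∩ M) E pI)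
    (hpUK : pU ∈ K) :
    (setDist (K ∪ M) E, pU) = (setDist K E, pK) ∧
      (setDist (K ∩ M) E, pI) = (setDist M E, pM) := by
  have hpMI : pM ∈ K ∩ M := ⟨hpU.mem_of_mem_union hK hU hE hpM hpUK, hpM.1⟩
  refine ⟨Prod.ext (hpU.setDist_eq_of_subset subset_union_left hpUK).symm
      ((hpU.of_subset subset_union_left hpUK).unique hpK),
    Prod.ext (hpM.setDist_eq_of_subset inter_subset_right hpMI)
      (hpI.unique (hpM.of_subset inter_subset_right hpMI))⟩

end IsUniqueNearestPoint

end NearestPoint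

theorem stmt_7_general (d : ℕ) (K M E : Set (EuclideanSpace ℝ (Fin d)))
    (hKc : IsCompact K)
    (hMc : IsCompact M)
    (hUconv : Convex ℝ (K ∪ M))
    (hEconv : Convex ℝ E)
    (pK pM pU pI : EuclideanSpace ℝ (Fin d))
    (hpK : IsUniqueNearestPoint K E pK) (hpM : IsUniqueNearestPoint M E pM)
    (hpU : IsUniqueNearestPoint (K ∪ M) E pU)
    (hpI : IsUniqueNearestPoint (K ∩ M) E pI) :
    ({(setDist (K ∪ M) E, pU), (setDist (K ∩ M) E, pI)} :
        Multiset (ℝ × EuclideanSpace ℝ (Fin d))) =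
      {(setDist K E, pK), (setDist M E, pM)} ∧
    ∀ Q : ℝ × EuclideanSpace ℝ (Fin d) → Prop,
      ((if Q (setDist (K ∪ M) E, pU) then (1 : ℕ) else 0) +
          (if Q (setDist (K ∩ M) E, pI) then 1 else 0)) =
        ((if Q (setDist K E, pK) then 1 else 0) +
          (if Q (setDist M E, pM) then 1 else 0)) := by
  have hcases : ((setDist (K ∪ M) E, pU) = (setDist K E, pK) ∧
        (setDist (K ∩ M) E, pI) = (setDist M E, pM)) ∨
      ((setDist (K ∪ M) E, pU) = (setDist M E, pM) ∧
        (setDist (K ∩ M) E, pI) = (setDist K E, pK)) := by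
    rcases hpU.1 with hpUK | hpUM
    · exact Or.inl <| IsUniqueNearestPoint.union_inter_of_mem hKc.isClosed hUconv hEconv
        hpK hpM hpU hpI hpUK
    · rw [union_comm] at hUconv hpU ⊢
      rw [inter_comm] at hpI ⊢
      exact Or.inr <| IsUniqueNearestPoint.union_inter_of_mem hMc.isClosed hUconv hEconv
        hpM hpK hpU hpI hpUM
  rcases hcases with ⟨hU, hI⟩ | ⟨hU, hI⟩ <;> rw [hU, hI]
  · exact ⟨rfl, fun _ => rfl⟩
  · exact ⟨Multiset.pair_comm _ _, fun _ => add_comm _ _⟩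

/-- For `K, M` nonempty compact convex with `K ∪ M` convex and `E` closed and
convex with unique nearest points in `K`, `M`, `K ∪ M` and `K ∩ M`, the
multiset of distance–foot-point pairs of `K ∪ M` and `K ∩ M` coincides with that
of `K` and `M`; in particular indicator sums of any predicate on such pairs
agree. -/
theorem stmt_7 (d : ℕ) (K M E : Set (EuclideanSpace ℝ (Fin d)))
    (hKc : IsCompact K) (hKne : K.Nonempty) (hKconv : Convex ℝ K)
    (hMc : IsCompact M) (hMne : M.Nonempty) (hMconv : Convex ℝ M)
    (hUconv : Convex ℝ (K ∪ M))
    (hEc : IsClosed E) (hEconv : Convex ℝ E)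
    (pK pM pU pI : EuclideanSpace ℝ (Fin d))
    (hpK : IsUniqueNearestPoint K E pK) (hpM : IsUniqueNearestPoint M E pM)
    (hpU : IsUniqueNearestPoint (K ∪ M) E pU)
    (hpI : IsUniqueNearestPoint (K ∩ M) E pI) :
    ({(setDist (K ∪ M) E, pU), (setDist (K ∩ M) E, pI)} :
        Multiset (ℝ × EuclideanSpace ℝ (Fin d))) =
      {(setDist K E, pK), (setDist M E, pM)} ∧
    ∀ Q : ℝ × EuclideanSpace ℝ (Fin d) → Prop,
      ((if Q (setDist (K ∪ M) E, pU) then (1 : ℕ) else 0) +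
          (if Q (setDist (K ∩ M) E, pI) then 1 else 0)) =
        ((if Q (setDist K E, pK) then 1 else 0) +
          (if Q (setDist M E, pM) then 1 else 0)) :=
  stmt_7_general d K M E hKc hMc hUconv hEconv pK pM pU pI hpK hpM hpU hpI
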